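/- Fix M ≥ 1 and set φ = π/(2M), c_N = (cos(π/(2N)))^N, and let (a_m(c), b_m(c)) = S_c^m(1,0) where S_c(a,b) = (a·cos φ − b·sin φ, c·(a·sin φ + b·cos φ)). Then the blocking-mode detection probability b_M(c_N)^2 converges to 1 as N → ∞; that is, for any fixed number of outer cycles M, the counterfactuality rate of the blocking mode tends to 1 as the number of inner cycles N tends to infinity. -/

import Mathlib

open Real Function Filter

open scoped Topology

/-!
With no damping (`c = 1`) each outer cycle is a rotation by `φ = π/(2M)`, so `M` cycles take
`(1, 0)` to `(cos (π/2), sin (π/2)) = (0, 1)`. The final amplitude `b_M(c)` is a polynomial in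
`c`, hence continuous, and the survival amplitude `c_N` tends to `1`: by `cos x ≥ 1 - x²/2` and
Bernoulli, `1 - π²/(8N) ≤ cos (π/(2N))^N ≤ 1`.
-/

lemma one_sub_mul_sq_div_two_le_cos_pow (n : ℕ) {x : ℝ} (hx : x ^ 2 ≤ 2) :
    1 - n * (x ^ 2 / 2) ≤ cos x ^ n :=
  calc 1 - n * (x ^ 2 / 2) = 1 + n * (-(x ^ 2 / 2)) := by ring
    _ ≤ (1 + -(x ^ 2 / 2)) ^ n := one_add_mul_le_pow (by linarith) n
    _ ≤ cos x ^ n := by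
      gcongr
      · linarith
      · linarith [one_sub_sq_div_two_le_cos (x := x)]

lemma cos_pow_le_one_of_sq_le_two (n : ℕ) {x : ℝ} (hx : x ^ 2 ≤ 2) : cos x ^ n ≤ 1 :=
  pow_le_one₀ (by linarith [one_sub_sq_div_two_le_cos (x := x)]) (cos_le_one x)

theorem tendsto_cos_div_pow_atTop (a : ℝ) :
    Tendsto (fun N : ℕ => cos (a / N) ^ N) atTop (𝓝 1) := by
  have h_lower : Tendsto (fun N : ℕ => 1 - a ^ 2 / 2 / N) atTop (𝓝 1) := by
    have h := (tendsto_const_div_atTop_nhds_zero_nat (a ^ 2 / 2)).const_sub 1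
    rwa [sub_zero] at h
  have h_small : ∀ᶠ N : ℕ in atTop, (a / N) ^ 2 ≤ 2 := by
    have h := (tendsto_const_div_atTop_nhds_zero_nat a).pow 2
    rw [zero_pow two_ne_zero] at h
    exact h.eventually (ge_mem_nhds two_pos)
  refine tendsto_of_tendsto_of_tendsto_of_le_of_le' h_lower tendsto_const_nhds ?_ ?_
  · filter_upwards [h_small, eventually_ne_atTop 0] with N hN hN0
    calc 1 - a ^ 2 / 2 / N = 1 - N * ((a / N) ^ 2 / 2) := by field_simp
      _ ≤ cos (a / N) ^ N := one_sub_mul_sq_div_two_le_cos_pow N hN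
  · filter_upwards [h_small] with N hN
    exact cos_pow_le_one_of_sq_le_two N hN

/-- The outer-cycle map `S_c` of the protocol, with the rotation angle `φ` made explicit. -/
noncomputable def dampedRotation (φ c : ℝ) (p : ℝ × ℝ) : ℝ × ℝ :=
  (p.1 * cos φ - p.2 * sin φ, c * (p.1 * sin φ + p.2 * cos φ))

lemma continuous_dampedRotation_iterate (φ : ℝ) (m : ℕ) (p : ℝ × ℝ) :
    Continuous fun c => (dampedRotation φ c)^[m] p := by
  induction m with
  | zero => exact continuous_const
  | succ m ih =>
    simp only [iterate_succ_apply', dampedRotation]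
    fun_prop

lemma dampedRotation_one_iterate (φ : ℝ) (m : ℕ) :
    (dampedRotation φ 1)^[m] (1, 0) = (cos (m * φ), sin (m * φ)) := by
  induction m with
  | zero => simp
  | succ m ih =>
    rw [iterate_succ_apply', ih, dampedRotation]
    push_cast
    rw [add_one_mul, cos_add, sin_add, one_mul, add_comm (sin _ * _)]

/-- Blocking-mode counterfactuality rate of SLAZ2013: for any fixed number of
outer cycles `M`, with `φ = π/(2M)`, damped outer evolution
`S c (a, b) = (a cos φ - b sin φ, c (a sin φ + b cos φ))` and inner-Zeno
survival amplitude `c_N = (cos (π/(2N)))^N`, the detection probability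
`b_M(c_N)^2` converges to 1 as `N → ∞`. -/
theorem blocking_mode_counterfactuality (M : ℕ) (hM : 1 ≤ M) (φ : ℝ)
    (hφ : φ = Real.pi / (2 * M)) (S : ℝ → ℝ × ℝ → ℝ × ℝ)
    (hS : ∀ (c : ℝ) (p : ℝ × ℝ),
      S c p = (p.1 * Real.cos φ - p.2 * Real.sin φ,
               c * (p.1 * Real.sin φ + p.2 * Real.cos φ))) :
    Filter.Tendsto
      (fun N : ℕ =>
        (((S ((Real.cos (Real.pi / (2 * N))) ^ N))^[M]
            ((1 : ℝ), (0 : ℝ))).2) ^ 2)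
      Filter.atTop (nhds 1) := by
  obtain rfl : S = dampedRotation φ := funext fun c => funext (hS c)
  have h_amplitude : Tendsto (fun N : ℕ => cos (π / (2 * N)) ^ N) atTop (𝓝 1) := by
    simpa only [← div_div] using tendsto_cos_div_pow_atTop (π / 2)
  have h_quarter_turn : (M : ℝ) * φ = π / 2 := by
    rw [hφ]
    field_simp [Nat.cast_ne_zero.mpr (by omega : M ≠ 0)]
  have h_lossless : ((dampedRotation φ 1)^[M] (1, 0)).2 ^ 2 = 1 := by
    rw [dampedRotation_one_iterate, h_quarter_turn, sin_pi_div_two, one_pow]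
  have h_cont : Tendsto (fun c => ((dampedRotation φ c)^[M] (1, 0)).2 ^ 2) (𝓝 1) (𝓝 1) :=
    ((continuous_dampedRotation_iterate φ M (1, 0)).snd.pow 2).tendsto' 1 1 h_lossless
  exact h_cont.comp h_amplitude
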